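/- arXiv:1801.03961 — 4 statements merged into one kernel-verified Lean document; each statement's English description precedes it below -/
import Mathlib

section
/- Let E(t) = exp(−t Bᵀ) and M_B = max_i ‖𝔹_iᵀ‖. There is a constant c = c(n, M_B) such that |(E(t) − I_N) x|_B ≤ c · max{|x|^{1/3}, |x|^{1/(2n+1)}} · max{|t|^{1/(2n+1)}, |t|^{n/(2n+1)}} for all x ∈ ℝ^N and t ∈ ℝ; specifically one can take c = (n(n+1)/2) · max{M_B^{1/(2n+1)}, M_B^{n/(2n+1)}}. -/
open scoped BigOperators

lemma aux_rpow_le_max {a α β e : ℝ} (ha : 0 ≤ a) (hα : 0 < α) (h1 : α ≤ e) (h2 : e ≤ β) :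
    a ^ e ≤ max (a ^ α) (a ^ β) := by
  rcases eq_or_lt_of_le ha with h0 | h0
  · rw [← h0, Real.zero_rpow (by linarith : e ≠ 0)]
    exact le_max_of_le_left (by rw [Real.zero_rpow hα.ne'])
  rcases le_total a 1 with h | h
  · exact le_max_of_le_left (Real.rpow_le_rpow_of_exponent_ge h0 h h1)
  · exact le_max_of_le_right (Real.rpow_le_rpow_of_exponent_le h h2)

lemma aux_rpow_add_le {a b r : ℝ} (ha : 0 ≤ a) (hb : 0 ≤ b) (hr0 : 0 ≤ r) (hr1 : r ≤ 1) :
    (a + b) ^ r ≤ a ^ r + b ^ r := by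
  have h := NNReal.coe_le_coe.2 (NNReal.rpow_add_le_add_rpow a.toNNReal b.toNNReal hr0 hr1)
  push_cast at h
  rwa [Real.coe_toNNReal _ ha, Real.coe_toNNReal _ hb] at h

lemma aux_rpow_sum_le {ι : Type*} {s : Finset ι} {f : ι → ℝ} (hf : ∀ i ∈ s, 0 ≤ f i)
    {r : ℝ} (hr0 : 0 < r) (hr1 : r ≤ 1) :
    (∑ i ∈ s, f i) ^ r ≤ ∑ i ∈ s, (f i) ^ r := by
  classical
  induction s using Finset.cons_induction with
  | empty => simp [Real.zero_rpow hr0.ne']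
  | cons a s has ih =>
    rw [Finset.sum_cons, Finset.sum_cons]
    have hfa : 0 ≤ f a := hf a (Finset.mem_cons_self _ _)
    have hfs : 0 ≤ ∑ i ∈ s, f i :=
      Finset.sum_nonneg fun i hi => hf i (Finset.mem_cons_of_mem hi)
    calc (f a + ∑ i ∈ s, f i) ^ r ≤ (f a) ^ r + (∑ i ∈ s, f i) ^ r :=
          aux_rpow_add_le hfa hfs hr0.le hr1
      _ ≤ (f a) ^ r + ∑ i ∈ s, (f i) ^ r := by
          gcongr
          exact ih fun i hi => hf i (Finset.mem_cons_of_mem hi)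

lemma aux_apply_le_norm {ι : Type*} [Fintype ι] {β : ι → Type*}
    [∀ i, SeminormedAddCommGroup (β i)] (x : PiLp 2 β) (i : ι) : ‖x i‖ ≤ ‖x‖ := by
  have h := PiLp.norm_sq_eq_of_L2 β x
  have h2 : ‖x i‖ ^ 2 ≤ ‖x‖ ^ 2 := by
    rw [h]
    exact Finset.single_le_sum (f := fun j => ‖x j‖ ^ 2) (fun j _ => sq_nonneg _)
      (Finset.mem_univ i)
  exact (pow_le_pow_iff_left₀ (norm_nonneg _) (norm_nonneg _) two_ne_zero).1 h2

/-- The homogeneous norm `|x|_B = ∑ i, |x^{(p_i)}|^{1/(2i+1)}` on the `L²`-product of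
Euclidean blocks. -/
noncomputable def normB (n : ℕ) (p : Fin (n + 1) → ℕ)
    (x : PiLp 2 (fun i : Fin (n + 1) => EuclideanSpace ℝ (Fin (p i)))) : ℝ :=
  ∑ i : Fin (n + 1), ‖x i‖ ^ ((1 : ℝ) / (2 * (i : ℕ) + 1))

/-- If `E t` fixes the `0`-th block and, for `i ≥ 1`, the `i`-th block of `E t x − x` is a
sum `∑_{k=1}^{i} ((-t)^k/k!) M_{i,k} x^{(p_{i-k})}` with `‖M_{i,k}‖ ≤ M_B^k` (expressed here
through the resulting norm bound), then
`|(E t − I) x|_B ≤ c · max{|x|^{1/3}, |x|^{1/(2n+1)}} · max{|t|^{1/(2n+1)}, |t|^{n/(2n+1)}}`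
with `c = (n(n+1)/2) · max{M_B^{1/(2n+1)}, M_B^{n/(2n+1)}}`. -/
theorem stmt2 (n : ℕ) (p : Fin (n + 1) → ℕ) (M_B : ℝ) (hM : 0 ≤ M_B)
    (E : ℝ → (PiLp 2 fun i : Fin (n + 1) => EuclideanSpace ℝ (Fin (p i))) →
      (PiLp 2 fun i : Fin (n + 1) => EuclideanSpace ℝ (Fin (p i))))
    (hE0 : ∀ t x, E t x 0 = x 0)
    (hEi : ∀ t x (i : Fin (n + 1)), 1 ≤ (i : ℕ) →
      ‖E t x i - x i‖ ≤ ∑ k ∈ Finset.Icc 1 (i : ℕ),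
        |t| ^ k / (Nat.factorial k) * M_B ^ k *
          ‖x ⟨(i : ℕ) - k, Nat.lt_of_le_of_lt (Nat.sub_le _ _) i.isLt⟩‖) :
    ∀ (x : PiLp 2 fun i : Fin (n + 1) => EuclideanSpace ℝ (Fin (p i))) (t : ℝ),
      normB n p (E t x - x) ≤
        ((n * (n + 1) : ℝ) / 2) *
          max (M_B ^ ((1 : ℝ) / (2 * n + 1))) (M_B ^ ((n : ℝ) / (2 * n + 1))) *
          max (‖x‖ ^ ((1 : ℝ) / 3)) (‖x‖ ^ ((1 : ℝ) / (2 * n + 1))) *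
          max (|t| ^ ((1 : ℝ) / (2 * n + 1))) (|t| ^ ((n : ℝ) / (2 * n + 1))) := by
  intro x t
  set Mm := max (M_B ^ ((1 : ℝ) / (2 * n + 1))) (M_B ^ ((n : ℝ) / (2 * n + 1))) with hMm
  set X := max (‖x‖ ^ ((1 : ℝ) / 3)) (‖x‖ ^ ((1 : ℝ) / (2 * n + 1))) with hX
  set T := max (|t| ^ ((1 : ℝ) / (2 * n + 1))) (|t| ^ ((n : ℝ) / (2 * n + 1))) with hT
  have hdpos : (0 : ℝ) < 2 * n + 1 := by positivity
  have hMm0 : 0 ≤ Mm := le_max_of_le_left (Real.rpow_nonneg hM _)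
  have hX0 : 0 ≤ X := le_max_of_le_left (Real.rpow_nonneg (norm_nonneg _) _)
  have hT0 : 0 ≤ T := le_max_of_le_left (Real.rpow_nonneg (abs_nonneg _) _)
  have key : ∀ i : Fin (n + 1),
      ‖(E t x - x) i‖ ^ ((1 : ℝ) / (2 * (i : ℕ) + 1)) ≤ (i : ℕ) * (Mm * X * T) := by
    intro i
    rcases Nat.eq_zero_or_pos (i : ℕ) with hi | hi
    · have hi0 : i = 0 := Fin.ext hi
      subst hi0
      have : (E t x - x) 0 = 0 := by
        show E t x 0 - x 0 = 0
        rw [hE0, sub_self]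
      rw [this]
      simp
    · -- i ≥ 1
      have hr0 : (0 : ℝ) < 1 / (2 * (i : ℕ) + 1) := by positivity
      have hr1 : (1 : ℝ) / (2 * (i : ℕ) + 1) ≤ 1 := by
        rw [div_le_one (by positivity)]
        have : (0 : ℝ) ≤ (i : ℕ) := Nat.cast_nonneg _
        linarith
      set r : ℝ := 1 / (2 * (i : ℕ) + 1) with hrdef
      have hsub : (E t x - x) i = E t x i - x i := rfl
      have hnn : ∀ k ∈ Finset.Icc 1 (i : ℕ),
          (0 : ℝ) ≤ |t| ^ k / (Nat.factorial k) * M_B ^ k *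
            ‖x ⟨(i : ℕ) - k, Nat.lt_of_le_of_lt (Nat.sub_le _ _) i.isLt⟩‖ := by
        intro k _; positivity
    -- step 1: rpow of the sum bound
      have h1 : ‖(E t x - x) i‖ ^ r ≤
          (∑ k ∈ Finset.Icc 1 (i : ℕ), |t| ^ k / (Nat.factorial k) * M_B ^ k *
            ‖x ⟨(i : ℕ) - k, Nat.lt_of_le_of_lt (Nat.sub_le _ _) i.isLt⟩‖) ^ r := by
        rw [hsub]
        exact Real.rpow_le_rpow (norm_nonneg _) (hEi t x i hi) hr0.le
      have h2 := aux_rpow_sum_le hnn hr0 hr1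
      -- step 2: each term's rpow is at most Mm * X * T
      have h3 : ∀ k ∈ Finset.Icc 1 (i : ℕ),
          (|t| ^ k / (Nat.factorial k) * M_B ^ k *
            ‖x ⟨(i : ℕ) - k, Nat.lt_of_le_of_lt (Nat.sub_le _ _) i.isLt⟩‖) ^ r ≤
            Mm * X * T := by
        intro k hk
        obtain ⟨hk1, hk2⟩ := Finset.mem_Icc.1 hk
        have hin : (i : ℕ) ≤ n := Nat.lt_succ_iff.1 i.isLt
        have hkR : (1 : ℝ) ≤ (k : ℕ) := by exact_mod_cast hk1
        have hkiR : ((k : ℕ) : ℝ) ≤ (i : ℕ) := by exact_mod_cast hk2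
        have hinR : ((i : ℕ) : ℝ) ≤ n := by exact_mod_cast hin
        have hiR1 : (1 : ℝ) ≤ (i : ℕ) := le_trans hkR hkiR
        -- bound the term by |t|^k * M_B^k * ‖x‖
        have hterm : |t| ^ k / (Nat.factorial k) * M_B ^ k *
            ‖x ⟨(i : ℕ) - k, Nat.lt_of_le_of_lt (Nat.sub_le _ _) i.isLt⟩‖ ≤
            M_B ^ k * ‖x‖ * |t| ^ k := by
          have hfac : |t| ^ k / (Nat.factorial k) ≤ |t| ^ k := by
            apply div_le_self (by positivity)
            exact_mod_cast Nat.one_le_iff_ne_zero.2 (Nat.factorial_ne_zero k)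
          have hxk := aux_apply_le_norm x
            ⟨(i : ℕ) - k, Nat.lt_of_le_of_lt (Nat.sub_le _ _) i.isLt⟩
          calc |t| ^ k / (Nat.factorial k) * M_B ^ k *
              ‖x ⟨(i : ℕ) - k, Nat.lt_of_le_of_lt (Nat.sub_le _ _) i.isLt⟩‖
              ≤ |t| ^ k * M_B ^ k * ‖x‖ := by
                apply mul_le_mul (mul_le_mul hfac le_rfl (by positivity) (by positivity))
                  hxk (norm_nonneg _) (by positivity)
            _ = M_B ^ k * ‖x‖ * |t| ^ k := by ring
        have h4 : (|t| ^ k / (Nat.factorial k) * M_B ^ k *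
            ‖x ⟨(i : ℕ) - k, Nat.lt_of_le_of_lt (Nat.sub_le _ _) i.isLt⟩‖) ^ r ≤
            (M_B ^ k * ‖x‖ * |t| ^ k) ^ r := by
          apply Real.rpow_le_rpow (by positivity) hterm hr0.le
        refine h4.trans ?_
        rw [Real.mul_rpow (by positivity) (by positivity),
          Real.mul_rpow (by positivity) (norm_nonneg _)]
        -- exponent facts
        have hkr_lo : (1 : ℝ) / (2 * n + 1) ≤ (k : ℕ) * r := by
          rw [hrdef]
          rw [div_le_iff₀ hdpos]
          have h2i : (0 : ℝ) < 2 * (i : ℕ) + 1 := by positivity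
          rw [mul_one_div, div_mul_eq_mul_div, le_div_iff₀ h2i]
          nlinarith
        have hkr_hi : (k : ℕ) * r ≤ (n : ℝ) / (2 * n + 1) := by
          rw [hrdef, mul_one_div, div_le_div_iff₀ (by positivity) hdpos]
          nlinarith
        have hMB : (M_B ^ k) ^ r ≤ Mm := by
          rw [← Real.rpow_natCast_mul hM]
          exact aux_rpow_le_max hM (by positivity) hkr_lo hkr_hi
        have hTk : (|t| ^ k) ^ r ≤ T := by
          rw [← Real.rpow_natCast_mul (abs_nonneg t)]
          exact aux_rpow_le_max (abs_nonneg t) (by positivity) hkr_lo hkr_hi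
        have hXr : ‖x‖ ^ r ≤ X := by
          rw [hX, max_comm]
          apply aux_rpow_le_max (norm_nonneg x) (by positivity)
          · rw [hrdef]
            exact one_div_le_one_div_of_le (by positivity) (by linarith)
          · rw [hrdef]
            exact one_div_le_one_div_of_le (by norm_num) (by linarith)
        exact mul_le_mul (mul_le_mul hMB hXr (Real.rpow_nonneg (norm_nonneg _) _) hMm0)
          hTk (Real.rpow_nonneg (by positivity) _) (by positivity)
      have h5 : ∑ k ∈ Finset.Icc 1 (i : ℕ),
          (|t| ^ k / (Nat.factorial k) * M_B ^ k *
            ‖x ⟨(i : ℕ) - k, Nat.lt_of_le_of_lt (Nat.sub_le _ _) i.isLt⟩‖) ^ r ≤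
          (i : ℕ) * (Mm * X * T) := by
        calc _ ≤ ∑ k ∈ Finset.Icc 1 (i : ℕ), (Mm * X * T) := Finset.sum_le_sum h3
          _ = ((i : ℕ) : ℝ) * (Mm * X * T) := by
              rw [Finset.sum_const, Nat.card_Icc]
              simp [nsmul_eq_mul]
      exact (h1.trans h2).trans h5
  -- sum up
  have hsum : normB n p (E t x - x) ≤ ∑ i : Fin (n + 1), ((i : ℕ) : ℝ) * (Mm * X * T) :=
    Finset.sum_le_sum fun i _ => key i
  have hgauss : ∑ i : Fin (n + 1), ((i : ℕ) : ℝ) = (n * (n + 1) : ℝ) / 2 := by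
    rw [Fin.sum_univ_eq_sum_range (fun i => ((i : ℕ) : ℝ)) (n + 1)]
    have h2 := congrArg (Nat.cast : ℕ → ℝ) (Finset.sum_range_id_mul_two (n + 1))
    push_cast at h2
    linarith
  calc normB n p (E t x - x) ≤ ∑ i : Fin (n + 1), ((i : ℕ) : ℝ) * (Mm * X * T) := hsum
    _ = (∑ i : Fin (n + 1), ((i : ℕ) : ℝ)) * (Mm * X * T) := by
        rw [← Finset.sum_mul]
    _ = ((n * (n + 1) : ℝ) / 2) * Mm * X * T := by rw [hgauss]; ring
end

section
/- (Subsolution under the Cordes–Landis condition, Lemma 4.2, pointwise form) Suppose λI_0 ≤ A(z) ≤ ΛI_0 and set A_0 = I_0, β = λ, s = Λ/λ. Then for every z with t > 0: sβ tr(I_0C^{-1}(t)) − tr(A(z)C^{-1}(t)) + (1/2)[(1/β)⟨A(z)C^{-1}(t)x, C^{-1}(t)x⟩ − ⟨I_0C^{-1}(t)x, C^{-1}(t)x⟩] ≥ 0, i.e., L_A Γ_{s,β} ≥ 0 wherever Γ_{s,β} is smooth. -/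
open Matrix

namespace Matrix

open scoped ComplexOrder

variable {n 𝕜 : Type*} [Fintype n] [RCLike 𝕜]

open scoped MatrixOrder in
theorem PosSemidef.trace_mul_nonneg {P Q : Matrix n n 𝕜} (hP : P.PosSemidef)
    (hQ : Q.PosSemidef) : 0 ≤ (P * Q).trace := by
  classical
  have hsqrt : P * Q = CFC.sqrt P * (CFC.sqrt P * Q) := by
    rw [← mul_assoc, CFC.sqrt_mul_sqrt_self P hP.nonneg]
  have hconj : (CFC.sqrt P * Q * CFC.sqrt P).PosSemidef := by
    simpa only [(CFC.sqrt_nonneg P).posSemidef.isHermitian.eq] using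
      hQ.mul_mul_conjTranspose_same (CFC.sqrt P)
  rw [hsqrt, trace_mul_comm]
  exact hconj.trace_nonneg

theorem trace_mul_le_trace_mul_of_posSemidef_sub {A B C : Matrix n n 𝕜}
    (hAB : (B - A).PosSemidef) (hC : C.PosSemidef) : (A * C).trace ≤ (B * C).trace := by
  simpa only [sub_mul, trace_sub, sub_nonneg] using hAB.trace_mul_nonneg hC

theorem dotProduct_mulVec_le_of_posSemidef_sub {A B : Matrix n n 𝕜}
    (hAB : (B - A).PosSemidef) (y : n → 𝕜) : star y ⬝ᵥ A *ᵥ y ≤ star y ⬝ᵥ B *ᵥ y := by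
  simpa only [sub_mulVec, dotProduct_sub, sub_nonneg] using hAB.dotProduct_mulVec_nonneg y

end Matrix

theorem stmt14_general (N : ℕ) (lam Lam : ℝ) (hlam : 0 < lam)
    (I0 A Cinv : Matrix (Fin N) (Fin N) ℝ)
    (hCinv : Cinv.PosSemidef)
    (hAlow : (A - lam • I0).PosSemidef) (hAup : (Lam • I0 - A).PosSemidef)
    (s β : ℝ) (hs : s = Lam / lam) (hβ : β = lam) :
    ∀ x : Fin N → ℝ,
      0 ≤ s * β * (I0 * Cinv).trace - (A * Cinv).trace +
        (1 / 2) * ((1 / β) * (Cinv.mulVec x ⬝ᵥ A.mulVec (Cinv.mulVec x)) -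
          (Cinv.mulVec x ⬝ᵥ I0.mulVec (Cinv.mulVec x))) := by
  intro x
  set y := Cinv *ᵥ x
  have htrace : (A * Cinv).trace ≤ Lam * (I0 * Cinv).trace := by
    simpa only [smul_mul, trace_smul, smul_eq_mul] using
      trace_mul_le_trace_mul_of_posSemidef_sub hAup hCinv
  have hquad : lam * (y ⬝ᵥ I0 *ᵥ y) ≤ y ⬝ᵥ A *ᵥ y := by
    have h := dotProduct_mulVec_le_of_posSemidef_sub hAlow y
    rwa [smul_mulVec, dotProduct_smul, smul_eq_mul] at h
  have hsβ : s * β = Lam := by rw [hs, hβ, div_mul_cancel₀ _ hlam.ne']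
  have hquad' : 0 ≤ (1 / β) * (y ⬝ᵥ A *ᵥ y) - y ⬝ᵥ I0 *ᵥ y := by
    rw [hβ, one_div_mul_eq_div, sub_nonneg, le_div_iff₀' hlam]
    exact hquad
  rw [hsβ]
  linarith

/-- Subsolution property under the Cordes–Landis condition (Lemma 4.2, pointwise form):
if `λ I_0 ≤ A ≤ Λ I_0`, `β = λ`, `s = Λ/λ`, then for every `x`
`sβ tr(I_0 C⁻¹) − tr(A C⁻¹) + ½[(1/β)⟨A C⁻¹x, C⁻¹x⟩ − ⟨I_0 C⁻¹x, C⁻¹x⟩] ≥ 0`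
(here `Cinv` stands for `C(t)⁻¹`, which is positive semidefinite). -/
theorem stmt14 (N : ℕ) (lam Lam : ℝ) (hlam : 0 < lam) (hLL : lam ≤ Lam)
    (I0 A Cinv : Matrix (Fin N) (Fin N) ℝ)
    (hI0 : I0.PosSemidef) (hCinv : Cinv.PosSemidef) (hAsymm : A.IsSymm)
    (hAlow : (A - lam • I0).PosSemidef) (hAup : (Lam • I0 - A).PosSemidef)
    (s β : ℝ) (hs : s = Lam / lam) (hβ : β = lam) :
    ∀ x : Fin N → ℝ,
      0 ≤ s * β * (I0 * Cinv).trace - (A * Cinv).trace +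
        (1 / 2) * ((1 / β) * (Cinv.mulVec x ⬝ᵥ A.mulVec (Cinv.mulVec x)) -
          (Cinv.mulVec x ⬝ᵥ I0.mulVec (Cinv.mulVec x))) :=
  stmt14_general N lam Lam hlam I0 A Cinv hCinv hAlow hAup s β hs hβ
end

section
/- (Upper bound for the Gaussian kernel on the lateral boundary, Lemma 3.1, core estimate) Under the assumptions that 0 < t − τ ≤ b_B r², C_0^{-1}(u) ≥ (1/(Λ_1 u)) I_N for 0 < u ≤ b_B, ‖E(σ)‖ ≤ 2 for |σ| ≤ b_B, |D_{1/r}x| ≥ K/σ̄, and |D_{1/r}ξ| ≤ 1 with K ≥ 8σ̄, one has ⟨C_0^{-1}(t−τ)(x − E(t−τ)ξ), (x − E(t−τ)ξ)⟩ ≥ (r²/(t−τ)) · K²/(2Λ_1σ̄²). -/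
open scoped RealInnerProductSpace

/-!
After rescaling by `D_{1/r}`, the lower bound on `C_0⁻¹` reduces the claim to
`|D_{1/r}x − E D_{1/r}ξ|² ≥ K²/(2σ̄²)`. Since `|E D_{1/r}ξ| ≤ 2` while `|D_{1/r}x| ≥ K/σ̄ ≥ 8`,
the reverse triangle inequality gives `|D_{1/r}x − E D_{1/r}ξ| ≥ K/σ̄ − 2`, and
`(c − 2)² ≥ c²/2` for `c ≥ 8`.
-/

lemma sq_div_two_le_norm_sub_sq {E : Type*} [SeminormedAddCommGroup E] {a b : E} {c : ℝ}
    (hc : 8 ≤ c) (ha : c ≤ ‖a‖) (hb : ‖b‖ ≤ 2) : c ^ 2 / 2 ≤ ‖a - b‖ ^ 2 := by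
  have hsub : c - 2 ≤ ‖a - b‖ := by linarith [norm_sub_norm_le a b]
  calc c ^ 2 / 2 ≤ (c - 2) ^ 2 := by nlinarith
    _ ≤ ‖a - b‖ ^ 2 := by gcongr; linarith

theorem stmt16_general (N : ℕ) (b_B Lam1 K σb r t τ : ℝ)
    (Cinv Edil D : ℝ → EuclideanSpace ℝ (Fin N) → EuclideanSpace ℝ (Fin N))
    (x ξ : EuclideanSpace ℝ (Fin N))
    (hr : 0 < r) (hLam1 : 0 < Lam1) (hσb : 0 < σb)
    (ht : 0 < t - τ) (hub : t - τ ≤ b_B * r ^ 2)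
    (hsplit : ∀ w : EuclideanSpace ℝ (Fin N),
      ⟪Cinv (t - τ) w, w⟫ = ⟪Cinv ((t - τ) / r ^ 2) (D (1 / r) w), D (1 / r) w⟫)
    (hClow : ∀ u : ℝ, 0 < u → u ≤ b_B → ∀ v : EuclideanSpace ℝ (Fin N),
      (1 / (Lam1 * u)) * ‖v‖ ^ 2 ≤ ⟪Cinv u v, v⟫)
    (hDlin : ∀ a b : EuclideanSpace ℝ (Fin N),
      D (1 / r) (a - b) = D (1 / r) a - D (1 / r) b)
    (hcomm : D (1 / r) (Edil (t - τ) ξ) = Edil ((t - τ) / r ^ 2) (D (1 / r) ξ))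
    (hE2 : ∀ v : EuclideanSpace ℝ (Fin N), ‖Edil ((t - τ) / r ^ 2) v‖ ≤ 2 * ‖v‖)
    (hx : K / σb ≤ ‖D (1 / r) x‖) (hξ : ‖D (1 / r) ξ‖ ≤ 1) (hK : 8 * σb ≤ K) :
    r ^ 2 / (t - τ) * (K ^ 2 / (2 * Lam1 * σb ^ 2)) ≤
      ⟪Cinv (t - τ) (x - Edil (t - τ) ξ), x - Edil (t - τ) ξ⟫ := by
  rw [hsplit, hDlin, hcomm]
  have hr2 : 0 < r ^ 2 := by positivity
  have hu : 0 < (t - τ) / r ^ 2 := div_pos ht hr2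
  have hub' : (t - τ) / r ^ 2 ≤ b_B := (div_le_iff₀ hr2).2 hub
  have h8 : 8 ≤ K / σb := (le_div_iff₀ hσb).2 (by linarith)
  have hv := sq_div_two_le_norm_sub_sq h8 hx ((hE2 (D (1 / r) ξ)).trans (by linarith))
  calc r ^ 2 / (t - τ) * (K ^ 2 / (2 * Lam1 * σb ^ 2))
      = 1 / (Lam1 * ((t - τ) / r ^ 2)) * ((K / σb) ^ 2 / 2) := by field_simp
    _ ≤ 1 / (Lam1 * ((t - τ) / r ^ 2)) *
          ‖D (1 / r) x - Edil ((t - τ) / r ^ 2) (D (1 / r) ξ)‖ ^ 2 := by gcongr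
    _ ≤ _ := hClow _ hu hub' _

/-- Upper bound for the Gaussian kernel on the lateral boundary (Lemma 3.1, core
estimate): under the dilation relation for `C_0⁻¹`, the lower quadratic-form bound
`C_0⁻¹(u) ≥ (1/(Λ1 u)) I`, the operator bound `‖E‖ ≤ 2`, `|D_{1/r}x| ≥ K/σ̄`,
`|D_{1/r}ξ| ≤ 1` and `K ≥ 8σ̄`, one has
`⟨C_0⁻¹(t−τ)(x − E(t−τ)ξ), x − E(t−τ)ξ⟩ ≥ (r²/(t−τ)) · K²/(2Λ1σ̄²)`. -/
theorem stmt16 (N : ℕ) (b_B Lam1 K σb r t τ : ℝ)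
    (Cinv Edil D : ℝ → EuclideanSpace ℝ (Fin N) → EuclideanSpace ℝ (Fin N))
    (x ξ : EuclideanSpace ℝ (Fin N))
    (hr : 0 < r) (hLam1 : 0 < Lam1) (hσb : 0 < σb) (hbB : 0 < b_B)
    (ht : 0 < t - τ) (hub : t - τ ≤ b_B * r ^ 2)
    (hsplit : ∀ w : EuclideanSpace ℝ (Fin N),
      ⟪Cinv (t - τ) w, w⟫ = ⟪Cinv ((t - τ) / r ^ 2) (D (1 / r) w), D (1 / r) w⟫)
    (hClow : ∀ u : ℝ, 0 < u → u ≤ b_B → ∀ v : EuclideanSpace ℝ (Fin N),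
      (1 / (Lam1 * u)) * ‖v‖ ^ 2 ≤ ⟪Cinv u v, v⟫)
    (hDlin : ∀ a b : EuclideanSpace ℝ (Fin N),
      D (1 / r) (a - b) = D (1 / r) a - D (1 / r) b)
    (hcomm : D (1 / r) (Edil (t - τ) ξ) = Edil ((t - τ) / r ^ 2) (D (1 / r) ξ))
    (hE2 : ∀ v : EuclideanSpace ℝ (Fin N), ‖Edil ((t - τ) / r ^ 2) v‖ ≤ 2 * ‖v‖)
    (hx : K / σb ≤ ‖D (1 / r) x‖) (hξ : ‖D (1 / r) ξ‖ ≤ 1) (hK : 8 * σb ≤ K) :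
    r ^ 2 / (t - τ) * (K ^ 2 / (2 * Lam1 * σb ^ 2)) ≤
      ⟪Cinv (t - τ) (x - Edil (t - τ) ξ), x - Edil (t - τ) ξ⟫ :=
  stmt16_general N b_B Lam1 K σb r t τ Cinv Edil D x ξ hr hLam1 hσb ht hub hsplit hClow hDlin hcomm
    hE2 hx hξ hK
end

section
/- (Lower bound for the Gaussian kernel, Lemma 3.2, core estimate) Suppose (1/4)b_B r² ≤ t − τ ≤ b_B r², C_0^{-1}(u) ≤ (1/(λ_1 u^{2n+1})) I_N for 0 < u ≤ b_B, ‖E(σ)‖ ≤ 2 for |σ| ≤ b_B, and |D_{1/r}x|, |D_{1/r}ξ| ≤ 1. Then ⟨C_0^{-1}(t−τ)(x − E(t−τ)ξ), (x − E(t−τ)ξ)⟩ ≤ (10/λ_1)(4/b_B)^{2n+1}, and therefore Γ_{s,β}(ζ^{-1}∘z) ≥ (b_B r²)^{-sQ/2} exp(−(5/(2λ_1β))(4/b_B)^{2n+1}). -/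
open scoped RealInnerProductSpace

/-!
Rescaling by `D_{1/r}` moves the quadratic form to time `u = (t - τ)/r² ∈ [b_B/4, b_B]`, where the
upper bound on `C_0⁻¹(u)` applies. By `(a + b)² ≤ 2a² + 2b²` and `‖E(u)‖ ≤ 2`, the rescaled vector
`D_{1/r}x - E(u) D_{1/r}ξ` has squared norm at most `2 + 8 = 10`, and `u ≥ b_B/4` gives
`u^{-(2n+1)} ≤ (4/b_B)^{2n+1}`. The kernel bound then follows since both `T ↦ T^{-sQ/2}` and
`q ↦ exp(-q)` are antitone.
-/

lemma norm_sub_sq_le_two_mul {E : Type*} [SeminormedAddCommGroup E] (a b : E) :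
    ‖a - b‖ ^ 2 ≤ 2 * (‖a‖ ^ 2 + ‖b‖ ^ 2) :=
  calc ‖a - b‖ ^ 2 ≤ (‖a‖ + ‖b‖) ^ 2 := by gcongr; exact norm_sub_le a b
    _ ≤ 2 * (‖a‖ ^ 2 + ‖b‖ ^ 2) := add_sq_le

lemma one_div_mul_pow_le_of_quarter_le {lam b u : ℝ} (k : ℕ) (hlam : 0 < lam) (hb : 0 < b)
    (hu : b / 4 ≤ u) : 1 / (lam * u ^ k) ≤ 1 / lam * (4 / b) ^ k := by
  have hu0 : 0 < u := by linarith
  have hinv : 1 / u ≤ 4 / b := by rw [div_le_div_iff₀ hu0 hb]; linarith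
  calc 1 / (lam * u ^ k) = 1 / lam * (1 / u) ^ k := by rw [one_div_pow, one_div_mul_one_div]
    _ ≤ 1 / lam * (4 / b) ^ k := by gcongr

lemma rpow_neg_mul_exp_neg_le {T T' p q q' : ℝ} (hT : 0 < T) (hTT' : T ≤ T') (hp : 0 ≤ p)
    (hq : q ≤ q') : T' ^ (-p) * Real.exp (-q') ≤ T ^ (-p) * Real.exp (-q) := by
  have hpow : T' ^ (-p) ≤ T ^ (-p) := Real.rpow_le_rpow_of_nonpos hT hTT' (by linarith)
  have hexp : Real.exp (-q') ≤ Real.exp (-q) := Real.exp_le_exp.mpr (by linarith)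
  gcongr

/-- Lower bound for the Gaussian kernel (Lemma 3.2, core estimate): under the dilation
relation for `C_0⁻¹`, the upper bound `C_0⁻¹(u) ≤ (1/(λ1 u^{2n+1})) I`, `‖E‖ ≤ 2`,
`|D_{1/r}x|, |D_{1/r}ξ| ≤ 1` and `(1/4) b_B r² ≤ t − τ ≤ b_B r²`, the quadratic form is
at most `(10/λ1)(4/b_B)^{2n+1}`, and therefore
`Γ_{s,β}(ζ⁻¹∘z) ≥ (b_B r²)^{−sQ/2} exp(−(5/(2λ1β))(4/b_B)^{2n+1})`. -/
theorem stmt17 (N n : ℕ) (Q : ℕ) (b_B lam1 s β r t τ : ℝ)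
    (Cinv Edil D : ℝ → EuclideanSpace ℝ (Fin N) → EuclideanSpace ℝ (Fin N))
    (x ξ : EuclideanSpace ℝ (Fin N))
    (hr : 0 < r) (hlam1 : 0 < lam1) (hbB : 0 < b_B) (hs : 0 < s) (hβ : 0 < β)
    (hlow : (1 / 4) * b_B * r ^ 2 ≤ t - τ) (hub : t - τ ≤ b_B * r ^ 2)
    (hsplit : ∀ w : EuclideanSpace ℝ (Fin N),
      ⟪Cinv (t - τ) w, w⟫ = ⟪Cinv ((t - τ) / r ^ 2) (D (1 / r) w), D (1 / r) w⟫)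
    (hCup : ∀ u : ℝ, 0 < u → u ≤ b_B → ∀ v : EuclideanSpace ℝ (Fin N),
      ⟪Cinv u v, v⟫ ≤ (1 / (lam1 * u ^ (2 * n + 1))) * ‖v‖ ^ 2)
    (hDlin : ∀ a b : EuclideanSpace ℝ (Fin N),
      D (1 / r) (a - b) = D (1 / r) a - D (1 / r) b)
    (hcomm : D (1 / r) (Edil (t - τ) ξ) = Edil ((t - τ) / r ^ 2) (D (1 / r) ξ))
    (hE2 : ∀ v : EuclideanSpace ℝ (Fin N), ‖Edil ((t - τ) / r ^ 2) v‖ ≤ 2 * ‖v‖)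
    (hx : ‖D (1 / r) x‖ ≤ 1) (hξ : ‖D (1 / r) ξ‖ ≤ 1) :
    ⟪Cinv (t - τ) (x - Edil (t - τ) ξ), x - Edil (t - τ) ξ⟫ ≤
        (10 / lam1) * (4 / b_B) ^ (2 * n + 1) ∧
    (b_B * r ^ 2) ^ (-(s * (Q : ℝ) / 2)) *
        Real.exp (-(5 / (2 * lam1 * β)) * (4 / b_B) ^ (2 * n + 1)) ≤
      (t - τ) ^ (-(s * (Q : ℝ) / 2)) *
        Real.exp (-(1 / (4 * β)) *
          ⟪Cinv (t - τ) (x - Edil (t - τ) ξ), x - Edil (t - τ) ξ⟫) := by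
  have hr2 : 0 < r ^ 2 := by positivity
  have ht_pos : 0 < t - τ := lt_of_lt_of_le (by positivity) hlow
  have hu_le : (t - τ) / r ^ 2 ≤ b_B := by rw [div_le_iff₀ hr2]; linarith
  have hu_ge : b_B / 4 ≤ (t - τ) / r ^ 2 := by rw [le_div_iff₀ hr2]; linarith
  have hu_pos : 0 < (t - τ) / r ^ 2 := div_pos ht_pos hr2
  have hrescaled : ‖D (1 / r) (x - Edil (t - τ) ξ)‖ ^ 2 ≤ 10 := by
    have hEξ := hE2 (D (1 / r) ξ)
    have hEξ_sq : ‖Edil ((t - τ) / r ^ 2) (D (1 / r) ξ)‖ ^ 2 ≤ 4 := by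
      nlinarith [norm_nonneg (Edil ((t - τ) / r ^ 2) (D (1 / r) ξ))]
    have hx_sq : ‖D (1 / r) x‖ ^ 2 ≤ 1 := pow_le_one₀ (norm_nonneg _) hx
    rw [hDlin, hcomm]
    linarith [norm_sub_sq_le_two_mul (D (1 / r) x) (Edil ((t - τ) / r ^ 2) (D (1 / r) ξ))]
  have hform : ⟪Cinv (t - τ) (x - Edil (t - τ) ξ), x - Edil (t - τ) ξ⟫ ≤
      (10 / lam1) * (4 / b_B) ^ (2 * n + 1) :=
    calc _ = ⟪Cinv ((t - τ) / r ^ 2) (D (1 / r) (x - Edil (t - τ) ξ)),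
            D (1 / r) (x - Edil (t - τ) ξ)⟫ := hsplit _
      _ ≤ 1 / (lam1 * ((t - τ) / r ^ 2) ^ (2 * n + 1)) *
            ‖D (1 / r) (x - Edil (t - τ) ξ)‖ ^ 2 := hCup _ hu_pos hu_le _
      _ ≤ 1 / lam1 * (4 / b_B) ^ (2 * n + 1) * 10 := by
          gcongr
          exact one_div_mul_pow_le_of_quarter_le _ hlam1 hbB hu_ge
      _ = (10 / lam1) * (4 / b_B) ^ (2 * n + 1) := by ring
  refine ⟨hform, ?_⟩
  rw [neg_mul, neg_mul]
  refine rpow_neg_mul_exp_neg_le ht_pos hub (by positivity) ?_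
  calc 1 / (4 * β) * _ ≤ 1 / (4 * β) * ((10 / lam1) * (4 / b_B) ^ (2 * n + 1)) := by gcongr
    _ = 5 / (2 * lam1 * β) * (4 / b_B) ^ (2 * n + 1) := by field_simp; ring
end
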